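/- arXiv:1101.4761 — 8 statements merged into one kernel-verified Lean document; each statement's English description precedes it below -/
import Mathlib

section
/- Let N ≥ 1, let k > -1 be real, let ρ > 0 be real, and let σ₁,…,σ_N ∈ {−1, 1}. Let C be the N×N real tridiagonal matrix with all diagonal entries −(1+k), all superdiagonal entries 1, and all subdiagonal entries k, and let D = ρ·diag(σ₁,…,σ_N). Then every complex root of the characteristic polynomial of J = C·D has nonzero real part; in particular J has no purely imaginary eigenvalue and is invertible. -/
open Matrix Polynomial

private lemma hyp_normSq_sub (a b : ℂ) :
    Complex.normSq (a - b) =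
      Complex.normSq a + Complex.normSq b - 2 * ((starRingEnd ℂ) a * b).re := by
  simp [Complex.normSq_apply, Complex.mul_re, Complex.sub_re, Complex.sub_im,
    Complex.conj_re, Complex.conj_im]
  ring

private lemma hyp_re_conj_comm (a b : ℂ) :
    ((starRingEnd ℂ) a * b).re = ((starRingEnd ℂ) b * a).re := by
  simp [Complex.mul_re, Complex.conj_re, Complex.conj_im]
  ring

private lemma hyp_identity (w : ℕ → ℂ) (m : ℕ) :
    2 * (∑ n ∈ Finset.range (m + 1), Complex.normSq (w n)) -
      2 * (∑ n ∈ Finset.range m, ((starRingEnd ℂ) (w n) * w (n + 1)).re) =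
    Complex.normSq (w 0) + Complex.normSq (w m) +
      ∑ n ∈ Finset.range m, Complex.normSq (w n - w (n + 1)) := by
  induction m with
  | zero => simp [Finset.sum_range_succ]; ring
  | succ p ih =>
    rw [Finset.sum_range_succ (f := fun n => Complex.normSq (w n)),
      Finset.sum_range_succ (f := fun n => ((starRingEnd ℂ) (w n) * w (n + 1)).re),
      Finset.sum_range_succ (f := fun n => Complex.normSq (w n - w (n + 1)))]
    have h := hyp_normSq_sub (w p) (w (p + 1))
    linarith [ih, h]

private lemma hyp_pos (w : ℕ → ℂ) (m : ℕ) (hw : ∃ n, n ≤ m ∧ w n ≠ 0) :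
    0 < Complex.normSq (w 0) + Complex.normSq (w m) +
      ∑ n ∈ Finset.range m, Complex.normSq (w n - w (n + 1)) := by
  obtain ⟨n, hn, hwn⟩ := hw
  by_contra h
  push_neg at h
  have hs : (0:ℝ) ≤ ∑ n ∈ Finset.range m, Complex.normSq (w n - w (n + 1)) :=
    Finset.sum_nonneg fun _ _ => Complex.normSq_nonneg _
  have h0 : Complex.normSq (w 0) = 0 := by
    nlinarith [Complex.normSq_nonneg (w 0), Complex.normSq_nonneg (w m)]
  have hsumz : ∑ n ∈ Finset.range m, Complex.normSq (w n - w (n + 1)) = 0 := by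
    nlinarith [Complex.normSq_nonneg (w 0), Complex.normSq_nonneg (w m)]
  have hstep : ∀ x, x < m → w x = w (x + 1) := by
    intro x hx
    have := (Finset.sum_eq_zero_iff_of_nonneg
      (fun _ _ => Complex.normSq_nonneg _)).mp hsumz x (Finset.mem_range.mpr hx)
    have := Complex.normSq_eq_zero.mp this
    exact sub_eq_zero.mp this
  have hw0 : w 0 = 0 := Complex.normSq_eq_zero.mp h0
  have hall : ∀ x, x ≤ m → w x = 0 := by
    intro x
    induction x with
    | zero => intro _; exact hw0
    | succ p ih =>
      intro hx
      rw [← hstep p (by omega)]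
      exact ih (by omega)
  exact hwn (hall n hn)

private lemma hyp_sum_ite {M : Type*} [AddCommMonoid M] {N : ℕ} (m : ℕ) (f : Fin N → M) :
    (∑ j : Fin N, if (j : ℕ) = m then f j else 0) =
      if h : m < N then f ⟨m, h⟩ else 0 := by
  split_ifs with h
  · rw [Finset.sum_eq_single ⟨m, h⟩]
    · simp
    · intro b _ hb
      rw [if_neg]
      intro hbm
      exact hb (Fin.ext hbm)
    · intro habs; exact absurd (Finset.mem_univ _) habs
  · apply Finset.sum_eq_zero
    intro j _
    rw [if_neg]
    have := j.isLt
    omega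

private lemma hyp_charpoly_eval {n : Type*} [Fintype n] [DecidableEq n]
    (M : Matrix n n ℂ) (z : ℂ) : M.charpoly.eval z = (z • 1 - M).det := by
  rw [Matrix.charpoly, ← Polynomial.coe_evalRingHom, RingHom.map_det]
  congr 1
  ext i j
  by_cases h : i = j
  · subst h
    simp [Matrix.charmatrix_apply_eq, Matrix.one_apply]
  · simp [Matrix.charmatrix_apply_ne _ _ _ h, Matrix.one_apply, h]

private lemma hyp_core (N : ℕ) (hN : 1 ≤ N) (k ρ : ℝ) (hk : -1 < k) (hρ : 0 < ρ)
    (σ : Fin N → ℝ) (hσ : ∀ i, σ i = 1 ∨ σ i = -1)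
    (C D : Matrix (Fin N) (Fin N) ℝ)
    (hC : ∀ i j : Fin N, C i j =
      if (i : ℕ) = (j : ℕ) then -(1 + k)
      else if (j : ℕ) = (i : ℕ) + 1 then 1
      else if (i : ℕ) = (j : ℕ) + 1 then k else 0)
    (hD : D = ρ • Matrix.diagonal σ)
    (z : ℂ) (v : Fin N → ℂ) (hv : v ≠ 0)
    (hzv : ((C * D).map (algebraMap ℝ ℂ)).mulVec v = z • v) : z.re ≠ 0 := by
  obtain ⟨m, rfl⟩ : ∃ m, N = m + 1 := ⟨N - 1, by omega⟩
  set f := algebraMap ℝ ℂ with hf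
  set u : Fin (m+1) → ℂ := fun i => ((ρ * σ i : ℝ) : ℂ) * v i with hudef
  set w : ℕ → ℂ := fun n => if h : n < m+1 then u ⟨n, h⟩ else 0 with hwdef
  have hu : (D.map f).mulVec v = u := by
    funext i
    simp [hD, Matrix.mulVec, dotProduct, Matrix.map_apply, Matrix.diagonal_apply,
      hudef, hf, Complex.coe_algebraMap, apply_ite (fun x : ℝ => (x : ℂ)),
      mul_ite, ite_mul, zero_mul, mul_zero, Finset.sum_ite_eq]
  have hCu : (C.map f).mulVec u = z • v := by
    rw [← hu, Matrix.mulVec_mulVec, ← Matrix.map_mul, hzv]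
  have hwu : ∀ i : Fin (m+1), u i = w (i : ℕ) := by
    intro i
    rw [hwdef]
    simp [i.isLt]
  have hmul : ∀ i : Fin (m+1), (C.map f).mulVec u i =
      (-(1+(k:ℂ))) * w i + w ((i:ℕ)+1) +
        (if (i:ℕ) = 0 then 0 else (k:ℂ) * w ((i:ℕ)-1)) := by
    intro i
    have hsplit : ∀ j : Fin (m+1), (C.map f) i j * u j =
        (if (j:ℕ) = (i:ℕ) then (-(1+(k:ℂ))) * u j else 0) +
        (if (j:ℕ) = (i:ℕ)+1 then u j else 0) +
        (if (i:ℕ) = 0 then 0 else if (j:ℕ) = (i:ℕ)-1 then (k:ℂ) * u j else 0) := by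
      intro j
      simp only [Matrix.map_apply, hC, hf, Complex.coe_algebraMap]
      split_ifs <;> first | (exfalso; omega) | (push_cast; ring)
    show (∑ j, (C.map f) i j * u j) = _
    rw [Finset.sum_congr rfl (fun j _ => hsplit j), Finset.sum_add_distrib,
      Finset.sum_add_distrib, hyp_sum_ite, hyp_sum_ite]
    have h1 : (if h : (i:ℕ) < m+1 then (-(1+(k:ℂ))) * u ⟨(i:ℕ), h⟩ else 0)
        = (-(1+(k:ℂ))) * w (i:ℕ) := by
      rw [dif_pos i.isLt, hwdef]; simp [i.isLt]
    have h2 : (if h : (i:ℕ)+1 < m+1 then u ⟨(i:ℕ)+1, h⟩ else 0) = w ((i:ℕ)+1) := by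
      rw [hwdef]
    rw [h1, h2]
    congr 1
    by_cases hi : (i:ℕ) = 0
    · simp [hi]
    · simp only [if_neg hi]
      rw [hyp_sum_ite]
      have hlt : (i:ℕ) - 1 < m + 1 := by have := i.isLt; omega
      rw [dif_pos hlt]
      have hw3 : w ((i:ℕ)-1) = u ⟨(i:ℕ)-1, hlt⟩ := by
        simp only [hwdef]
        rw [dif_pos hlt]
      rw [hw3]
  set Q : ℂ := ∑ i : Fin (m+1), (starRingEnd ℂ) (u i) * ((C.map f).mulVec u i) with hQdef
  set r : ℝ := ρ * ∑ i : Fin (m+1), σ i * Complex.normSq (v i) with hrdef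
  have hQ1 : Q = z * (r : ℂ) := by
    rw [hQdef]
    have hterm : ∀ i : Fin (m+1), (starRingEnd ℂ) (u i) * ((C.map f).mulVec u i)
        = z * ((σ i * Complex.normSq (v i) * ρ : ℝ) : ℂ) := by
      intro i
      rw [hCu]
      simp only [Pi.smul_apply, smul_eq_mul, hudef]
      calc (starRingEnd ℂ) ((↑(ρ * σ i) : ℂ) * v i) * (z * v i)
          = z * ((↑(ρ * σ i) : ℂ) * ((starRingEnd ℂ) (v i) * v i)) := by
            rw [_root_.map_mul, Complex.conj_ofReal]; ring
        _ = z * ((↑(ρ * σ i) : ℂ) * (↑(Complex.normSq (v i)) : ℂ)) := by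
            rw [← Complex.normSq_eq_conj_mul_self]
        _ = z * ((σ i * Complex.normSq (v i) * ρ : ℝ) : ℂ) := by push_cast; ring
    rw [Finset.sum_congr rfl (fun i _ => hterm i), ← Finset.mul_sum, hrdef]
    congr 1
    push_cast
    rw [← Finset.sum_mul]
    ring
  have hQre1 : Q.re = z.re * r := by
    rw [hQ1]
    simp [Complex.mul_re]
  set T : ℝ := ∑ n ∈ Finset.range (m+1), Complex.normSq (w n) with hT
  set S : ℝ := ∑ n ∈ Finset.range m, ((starRingEnd ℂ) (w n) * w (n+1)).re with hS
  have hQre2 : Q.re = -(1+k) * T + S + k * S := by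
    rw [hQdef]
    have hterm : ∀ i : Fin (m+1), (starRingEnd ℂ) (u i) * ((C.map f).mulVec u i)
        = (fun n => (starRingEnd ℂ) (w n) * ((-(1+(k:ℂ))) * w n + w (n+1) +
            (if n = 0 then 0 else (k:ℂ) * w (n-1)))) (i : ℕ) := by
      intro i
      rw [hmul i, hwu i]
    have hsum : (∑ i : Fin (m+1), (starRingEnd ℂ) (u i) * ((C.map f).mulVec u) i)
        = ∑ n ∈ Finset.range (m+1), (starRingEnd ℂ) (w n) * ((-(1+(k:ℂ))) * w n + w (n+1) +
            (if n = 0 then 0 else (k:ℂ) * w (n-1))) := by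
      rw [← Fin.sum_univ_eq_sum_range (fun n => (starRingEnd ℂ) (w n) * ((-(1+(k:ℂ))) * w n
        + w (n+1) + (if n = 0 then 0 else (k:ℂ) * w (n-1)))) (m+1)]
      exact Finset.sum_congr rfl fun i _ => hterm i
    rw [hsum, Complex.re_sum]
    have hre : ∀ n, ((starRingEnd ℂ) (w n) * ((-(1+(k:ℂ))) * w n + w (n+1) +
          (if n = 0 then 0 else (k:ℂ) * w (n-1)))).re
        = -(1+k) * Complex.normSq (w n) + ((starRingEnd ℂ) (w n) * w (n+1)).re +
          (if n = 0 then 0 else k * ((starRingEnd ℂ) (w n) * w (n-1)).re) := by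
      intro n
      by_cases hn : n = 0 <;>
        simp only [hn, if_pos, if_neg, if_true, if_false, ite_true, ite_false] <;>
        simp [Complex.mul_re, Complex.mul_im, Complex.add_re, Complex.add_im,
          Complex.conj_re, Complex.conj_im, Complex.normSq_apply] <;>
        ring
    rw [Finset.sum_congr rfl (fun n _ => hre n), Finset.sum_add_distrib, Finset.sum_add_distrib]
    have e1 : ∑ n ∈ Finset.range (m+1), (-(1+k) * Complex.normSq (w n)) = -(1+k) * T := by
      rw [hT, Finset.mul_sum]
    have e2 : ∑ n ∈ Finset.range (m+1), ((starRingEnd ℂ) (w n) * w (n+1)).re = S := by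
      rw [Finset.sum_range_succ]
      have hwm : w (m+1) = 0 := by simp [hwdef]
      simp [hwm, hS]
    have e3 : ∑ n ∈ Finset.range (m+1),
        (if n = 0 then (0:ℝ) else k * ((starRingEnd ℂ) (w n) * w (n-1)).re) = k * S := by
      rw [Finset.sum_range_succ']
      simp only [Nat.succ_ne_zero, if_false, Nat.add_sub_cancel, if_pos, add_zero, ite_true,
        ite_false, if_true]
      rw [hS, Finset.mul_sum]
      refine Finset.sum_congr rfl fun n _ => ?_
      rw [hyp_re_conj_comm]
    rw [e1, e2, e3]
  obtain ⟨i0, hi0⟩ : ∃ i, v i ≠ 0 := by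
    by_contra h
    push_neg at h
    exact hv (funext h)
  have hu0 : u i0 ≠ 0 := by
    rw [hudef]
    apply mul_ne_zero _ hi0
    simp only [ne_eq, Complex.ofReal_eq_zero]
    rcases hσ i0 with h | h <;> rw [h] <;> nlinarith
  have hwn : ∃ n, n ≤ m ∧ w n ≠ 0 :=
    ⟨(i0:ℕ), by have := i0.isLt; omega, by rw [← hwu i0]; exact hu0⟩
  have hP := hyp_pos w m hwn
  have hid := hyp_identity w m
  have hTS : 0 < T - S := by rw [hT, hS]; linarith
  have hQneg : Q.re < 0 := by
    rw [hQre2]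
    nlinarith
  intro h0
  rw [hQre1, h0, zero_mul] at hQneg
  exact lt_irrefl 0 hQneg

/-- For `k > -1`, every root of the characteristic polynomial of
`J = C·D` has nonzero real part; in particular `J` has no purely imaginary
eigenvalue and is invertible. -/
theorem hyperbolicity (N : ℕ) (hN : 1 ≤ N) (k ρ : ℝ) (hk : -1 < k) (hρ : 0 < ρ)
    (σ : Fin N → ℝ) (hσ : ∀ i, σ i = 1 ∨ σ i = -1)
    (C D : Matrix (Fin N) (Fin N) ℝ)
    (hC : ∀ i j : Fin N, C i j =
      if (i : ℕ) = (j : ℕ) then -(1 + k)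
      else if (j : ℕ) = (i : ℕ) + 1 then 1
      else if (i : ℕ) = (j : ℕ) + 1 then k else 0)
    (hD : D = ρ • Matrix.diagonal σ) :
    (∀ z ∈ ((C * D).map (algebraMap ℝ ℂ)).charpoly.roots, z.re ≠ 0) ∧
      IsUnit (C * D) := by
  constructor
  · intro z hz
    have hmono := ((C * D).map (algebraMap ℝ ℂ)).charpoly_monic
    rw [Polynomial.mem_roots hmono.ne_zero] at hz
    have heval : (((C * D).map (algebraMap ℝ ℂ)).charpoly).eval z = 0 := hz
    rw [hyp_charpoly_eval] at heval
    obtain ⟨v, hv0, hv⟩ := Matrix.exists_mulVec_eq_zero_iff.mpr heval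
    have hmv : ((C * D).map (algebraMap ℝ ℂ)).mulVec v = z • v := by
      rw [Matrix.sub_mulVec, Matrix.smul_mulVec, Matrix.one_mulVec] at hv
      have := sub_eq_zero.mp hv
      exact this.symm
    exact hyp_core N hN k ρ hk hρ σ hσ C D hC hD z v hv0 hmv
  · rw [Matrix.isUnit_iff_isUnit_det, isUnit_iff_ne_zero]
    intro hdet
    have hdetC : ((C * D).map (algebraMap ℝ ℂ)).det = 0 := by
      have h := (algebraMap ℝ ℂ).map_det (C * D)
      rw [hdet, map_zero] at h
      rw [RingHom.mapMatrix_apply] at h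
      exact h.symm
    obtain ⟨v, hv0, hv⟩ := Matrix.exists_mulVec_eq_zero_iff.mpr hdetC
    have hmv : ((C * D).map (algebraMap ℝ ℂ)).mulVec v = (0 : ℂ) • v := by
      simpa using hv
    have := hyp_core N hN k ρ hk hρ σ hσ C D hC hD 0 v hv0 hmv
    exact this Complex.zero_re
end

section
/- Let N ≥ 1 and let k > −1 be real. Let C be the N×N real tridiagonal matrix with all diagonal entries −(1+k), all superdiagonal entries 1, and all subdiagonal entries k. Then det C ≠ 0, i.e. C is invertible. -/
open Matrix Finset

noncomputable def Tmat (k : ℝ) (n : ℕ) : Matrix (Fin n) (Fin n) ℝ :=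
  Matrix.of fun i j =>
    if (i : ℕ) = (j : ℕ) then -(1 + k)
    else if (j : ℕ) = (i : ℕ) + 1 then 1
    else if (i : ℕ) = (j : ℕ) + 1 then k else 0

lemma Tmat_rec (k : ℝ) (n : ℕ) :
    (Tmat k (n+2)).det = -(1+k) * (Tmat k (n+1)).det - k * (Tmat k n).det := by
  rw [Matrix.det_succ_row_zero, Fin.sum_univ_succ, Fin.sum_univ_succ]
  have h00 : Tmat k (n+2) 0 0 = -(1+k) := by simp [Tmat]
  have h01 : Tmat k (n+2) 0 (Fin.succ 0) = 1 := by simp [Tmat]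
  have hrest : ∀ i : Fin n, Tmat k (n+2) 0 (Fin.succ (Fin.succ i)) = 0 := by
    intro i; simp [Tmat]
  have hsub0 : (Tmat k (n+2)).submatrix Fin.succ (Fin.succAbove 0) = Tmat k (n+1) := by
    ext i j
    simp [Tmat, Fin.succAbove, Fin.lt_def]
  -- the second submatrix
  set M2 : Matrix (Fin (n+1)) (Fin (n+1)) ℝ :=
    (Tmat k (n+2)).submatrix Fin.succ (Fin.succAbove (Fin.succ 0)) with hM2
  have hM2det : M2.det = k * (Tmat k n).det := by
    rw [Matrix.det_succ_column_zero, Fin.sum_univ_succ]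
    have e0 : M2 0 0 = k := by
      simp [hM2, Tmat, Fin.succAbove, Fin.lt_def]
    have erest : ∀ i : Fin n, M2 (Fin.succ i) 0 = 0 := by
      intro i
      simp [hM2, Tmat, Fin.succAbove, Fin.lt_def]
    have esub : M2.submatrix (Fin.succAbove 0) Fin.succ = Tmat k n := by
      ext i j
      simp [hM2, Tmat, Fin.succAbove, Fin.lt_def]
    rw [esub, e0]
    simp [erest]
  rw [h00, h01, hsub0, hM2det]
  have : ∑ i : Fin n,
      (-1 : ℝ) ^ ((Fin.succ (Fin.succ i) : Fin (n+2)) : ℕ) *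
        Tmat k (n+2) 0 (Fin.succ (Fin.succ i)) *
        ((Tmat k (n+2)).submatrix Fin.succ (Fin.succAbove (Fin.succ (Fin.succ i)))).det = 0 := by
    apply Finset.sum_eq_zero
    intro i _
    rw [hrest i]; ring
  rw [this]
  simp
  ring

lemma Tmat_det (k : ℝ) : ∀ n : ℕ,
    (Tmat k n).det = (-1)^n * ∑ i ∈ Finset.range (n+1), k^i := by
  intro n
  induction n using Nat.strong_induction_on with
  | _ n ih =>
    match n with
    | 0 => simp [Tmat]
    | 1 =>
      rw [show (Tmat k 1).det = Tmat k 1 0 0 from Matrix.det_fin_one _]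
      simp [Tmat, Finset.sum_range_succ]
    | (m+2) =>
      rw [Tmat_rec, ih (m+1) (by omega), ih m (by omega)]
      rw [Finset.sum_range_succ (n := m+2), Finset.sum_range_succ (n := m+1)]
      ring

/-- For `k > −1` the tridiagonal coupling matrix `C` has nonzero
determinant, i.e. `C` is invertible. -/
theorem C_invertible (N : ℕ) (hN : 1 ≤ N) (k : ℝ) (hk : -1 < k)
    (C : Matrix (Fin N) (Fin N) ℝ)
    (hC : ∀ i j : Fin N, C i j =
      if (i : ℕ) = (j : ℕ) then -(1 + k)
      else if (j : ℕ) = (i : ℕ) + 1 then 1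
      else if (i : ℕ) = (j : ℕ) + 1 then k else 0) :
    C.det ≠ 0 := by
  have hCeq : C = Tmat k N := by
    ext i j
    rw [hC i j]; rfl
  rw [hCeq, Tmat_det]
  have hpos : 0 < ∑ i ∈ Finset.range (N+1), k ^ i :=
    geom_sum_pos' (by linarith) (by omega)
  have h1 : ((-1 : ℝ))^N ≠ 0 := by
    apply pow_ne_zero; norm_num
  positivity
end

section
/- Let N ≥ 1 and let k > −1 be real. Let C be the N×N real tridiagonal matrix with all diagonal entries −(1+k), all superdiagonal entries 1, and all subdiagonal entries k. Then for every nonzero vector a ∈ ℝ^N one has aᵀ C a < 0; i.e. the symmetric part of C is negative definite. -/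
open Matrix

/-- For `k > −1` the quadratic form of the tridiagonal coupling
matrix `C` is negative definite: `aᵀCa < 0` for every nonzero `a`. -/
theorem C_negative_definite (N : ℕ) (hN : 1 ≤ N) (k : ℝ) (hk : -1 < k)
    (C : Matrix (Fin N) (Fin N) ℝ)
    (hC : ∀ i j : Fin N, C i j =
      if (i : ℕ) = (j : ℕ) then -(1 + k)
      else if (j : ℕ) = (i : ℕ) + 1 then 1
      else if (i : ℕ) = (j : ℕ) + 1 then k else 0) :
    ∀ a : Fin N → ℝ, a ≠ 0 → a ⬝ᵥ (C *ᵥ a) < 0 := by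
  intro a ha
  set b : ℕ → ℝ := fun n => if h : n < N then a ⟨n, h⟩ else 0 with hbdef
  have hab : ∀ i : Fin N, a i = b ↑i := by
    intro i; simp [hbdef, i.isLt]
  have hbz : ∀ n, N ≤ n → b n = 0 := by
    intro n hn; simp [hbdef, Nat.not_lt.mpr hn]
  -- Step 1: express the quadratic form as a double sum over `Finset.range N`.
  have h1 : a ⬝ᵥ (C *ᵥ a) = ∑ i ∈ Finset.range N, ∑ j ∈ Finset.range N,
      ((if i = j then -(1+k) * (b i * b j) else 0)
        + (if j = i + 1 then b i * b j else 0)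
        + (if i = j + 1 then k * (b i * b j) else 0)) := by
    have hfin : a ⬝ᵥ (C *ᵥ a) = ∑ i : Fin N, ∑ j : Fin N,
        ((if (i:ℕ) = (j:ℕ) then -(1+k) * (b ↑i * b ↑j) else 0)
          + (if (j:ℕ) = (i:ℕ) + 1 then b ↑i * b ↑j else 0)
          + (if (i:ℕ) = (j:ℕ) + 1 then k * (b ↑i * b ↑j) else 0)) := by
      simp only [dotProduct, Matrix.mulVec, dotProduct, Finset.mul_sum]
      refine Finset.sum_congr rfl fun i _ => Finset.sum_congr rfl fun j _ => ?_
      rw [hC, hab i, hab j]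
      split_ifs <;> first | ring1 | (exfalso; omega)
    rw [hfin]
    rw [show (∑ i : Fin N, ∑ j : Fin N,
        ((if (i:ℕ) = (j:ℕ) then -(1+k) * (b ↑i * b ↑j) else 0)
          + (if (j:ℕ) = (i:ℕ) + 1 then b ↑i * b ↑j else 0)
          + (if (i:ℕ) = (j:ℕ) + 1 then k * (b ↑i * b ↑j) else 0)))
        = ∑ i : Fin N, ∑ j ∈ Finset.range N,
          ((if (i:ℕ) = j then -(1+k) * (b ↑i * b j) else 0)
            + (if j = (i:ℕ) + 1 then b ↑i * b j else 0)
            + (if (i:ℕ) = j + 1 then k * (b ↑i * b j) else 0)) from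
      Finset.sum_congr rfl fun i _ => Fin.sum_univ_eq_sum_range
        (fun j => (if (i:ℕ) = j then -(1+k) * (b ↑i * b j) else 0)
          + (if j = (i:ℕ) + 1 then b ↑i * b j else 0)
          + (if (i:ℕ) = j + 1 then k * (b ↑i * b j) else 0)) N]
    exact Fin.sum_univ_eq_sum_range
      (fun i => ∑ j ∈ Finset.range N,
        ((if i = j then -(1+k) * (b i * b j) else 0)
          + (if j = i + 1 then b i * b j else 0)
          + (if i = j + 1 then k * (b i * b j) else 0))) N
  -- Step 2: compute the three pieces.
  have h2 : a ⬝ᵥ (C *ᵥ a)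
      = -(1+k) * (∑ i ∈ Finset.range N, b i * b i)
        + (1+k) * (∑ i ∈ Finset.range N, b i * b (i+1)) := by
    rw [h1]
    simp only [Finset.sum_add_distrib]
    have hD1 : (∑ i ∈ Finset.range N, ∑ j ∈ Finset.range N,
        (if i = j then -(1+k) * (b i * b j) else 0))
        = -(1+k) * (∑ i ∈ Finset.range N, b i * b i) := by
      rw [Finset.mul_sum]
      refine Finset.sum_congr rfl fun i hi => ?_
      rw [Finset.sum_ite_eq, if_pos hi]
    have hD2 : (∑ i ∈ Finset.range N, ∑ j ∈ Finset.range N,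
        (if j = i + 1 then b i * b j else 0))
        = ∑ i ∈ Finset.range N, b i * b (i+1) := by
      refine Finset.sum_congr rfl fun i hi => ?_
      rw [Finset.sum_ite_eq']
      by_cases h : i + 1 ∈ Finset.range N
      · rw [if_pos h]
      · rw [if_neg h,
          hbz (i+1) (Nat.le_of_not_lt (fun hlt => h (Finset.mem_range.mpr hlt))), mul_zero]
    have hD3 : (∑ i ∈ Finset.range N, ∑ j ∈ Finset.range N,
        (if i = j + 1 then k * (b i * b j) else 0))
        = k * (∑ i ∈ Finset.range N, b i * b (i+1)) := by
      rw [Finset.sum_comm, Finset.mul_sum]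
      refine Finset.sum_congr rfl fun j hj => ?_
      rw [Finset.sum_ite_eq']
      by_cases h : j + 1 ∈ Finset.range N
      · rw [if_pos h]; ring
      · rw [if_neg h,
          hbz (j+1) (Nat.le_of_not_lt (fun hlt => h (Finset.mem_range.mpr hlt)))]
        ring
    rw [hD1, hD2, hD3]; ring
  -- Telescoping and square identities.
  set P := ∑ i ∈ Finset.range N, b i * b i with hP
  set P' := ∑ i ∈ Finset.range N, b (i+1) * b (i+1) with hP'
  set T := ∑ i ∈ Finset.range N, b i * b (i+1) with hT
  have htel : P - P' = b 0 * b 0 := by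
    rw [hP, hP', ← Finset.sum_sub_distrib]
    rw [Finset.sum_range_sub' (fun n => b n * b n) N]
    rw [hbz N le_rfl]; ring
  have hsq : (∑ i ∈ Finset.range N, (b i - b (i+1))^2) = P - 2*T + P' := by
    have hring : ∀ i ∈ Finset.range N, (b i - b (i+1))^2
        = b i * b i - 2*(b i * b (i+1)) + b (i+1) * b (i+1) := fun i _ => by ring
    rw [Finset.sum_congr rfl hring]
    simp only [Finset.sum_add_distrib, Finset.sum_sub_distrib]
    rw [← Finset.mul_sum]
  set E := b 0 * b 0 + ∑ i ∈ Finset.range N, (b i - b (i+1))^2 with hE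
  have hsumnn : (0:ℝ) ≤ ∑ i ∈ Finset.range N, (b i - b (i+1))^2 :=
    Finset.sum_nonneg fun i _ => sq_nonneg _
  have hEpos : 0 < E := by
    rcases lt_or_eq_of_le (le_add_of_nonneg_of_le (mul_self_nonneg (b 0)) hsumnn) with h | h
    · exact h
    exfalso
    have hb00 : b 0 * b 0 = 0 := by nlinarith [mul_self_nonneg (b 0)]
    have hb0 : b 0 = 0 := by nlinarith [mul_self_nonneg (b 0)]
    have hsum0 : (∑ i ∈ Finset.range N, (b i - b (i+1))^2) = 0 := by linarith
    have hstep : ∀ i ∈ Finset.range N, (b i - b (i+1))^2 = 0 :=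
      (Finset.sum_eq_zero_iff_of_nonneg (fun i _ => sq_nonneg _)).mp hsum0
    have hall : ∀ n, b n = 0 := by
      intro n
      induction n with
      | zero => exact hb0
      | succ m ih =>
        by_cases hm : m < N
        · have h0 := sq_eq_zero_iff.mp (hstep m (Finset.mem_range.mpr hm))
          linarith
        · exact hbz (m+1) (by omega)
    apply ha
    funext i
    rw [hab i, hall ↑i]; rfl
  have hk1 : (0:ℝ) < 1 + k := by linarith
  have hQ : P - T = E / 2 := by
    rw [hE, hsq]; linarith [htel]
  have hQpos : 0 < P - T := by rw [hQ]; positivity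
  rw [h2]
  nlinarith [mul_pos hk1 hQpos]
end

section
/- Let N ≥ 1, let k and δ be real, and let Γ: ℝ → ℝ be continuous. Let C be the N×N real tridiagonal matrix with all diagonal entries −(1+k), all superdiagonal entries 1, and all subdiagonal entries k, and let Ω^δ ∈ ℝ^N be defined by Ω₁ = kΓ(δ), Ωᵢ = 0 for 2 ≤ i ≤ N−1, and Ω_N = Γ(δ). Let x: ℝ → ℝ^N be a differentiable solution of ẋ = Ω^δ + CΓ(x) (with Γ applied componentwise), and define E(x) = Σ_{i=1}^N ( ∫₀^{xᵢ} Γ(y) dy − Γ(δ)·xᵢ ). Then for every t, d/dt E(x(t)) = −((k+1)/2) · ( (Γ(x₁(t)) − Γ(δ))² + (Γ(x_N(t)) − Γ(δ))² + Σ_{i=1}^{N−1} (Γ(xᵢ(t)) − Γ(xᵢ₊₁(t)))² ). -/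
/-!
Because `Ω^δ = -C (Γ(δ), …, Γ(δ))`, the system reads `ẋ = C h` with `h = Γ(x) - Γ(δ)`, and the
fundamental theorem of calculus gives `dE/dt = ⟨h, C h⟩`. Writing `C = -(1 + k) I + S + k Sᵀ` with
`S` the superdiagonal shift, `⟨h, C h⟩ = -(1 + k) (Σ hᵢ² - Σ hᵢ hᵢ₊₁)`, and completing the squares
turns `2 Σ hᵢ² - 2 Σ hᵢ hᵢ₊₁` into `h₁² + h_N² + Σ (hᵢ - hᵢ₊₁)²`.
-/

open Matrix

/-- The Lyapunov-type functional `E(x) = Σᵢ (∫₀^{xᵢ} Γ(y) dy − Γ(δ)·xᵢ)`. -/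
noncomputable def lyapunovE (N : ℕ) (Γ : ℝ → ℝ) (δ : ℝ) (v : Fin N → ℝ) : ℝ :=
  ∑ i, ((∫ y in (0:ℝ)..(v i), Γ y) - Γ δ * v i)

section Shift

variable {R : Type*} [CommRing R]

def shiftMatrix (n : ℕ) : Matrix (Fin n) (Fin n) R :=
  Matrix.of fun i j => if (j : ℕ) = i + 1 then 1 else 0

theorem Fin.sum_ite_val_eq_dite {n : ℕ} (m : ℕ) (a : Fin n → R) :
    (∑ j : Fin n, if (j : ℕ) = m then a j else 0) = if h : m < n then a ⟨m, h⟩ else 0 := by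
  split_ifs with h
  · simpa [Fin.ext_iff] using Finset.sum_ite_eq' Finset.univ (⟨m, h⟩ : Fin n) a
  · exact Finset.sum_eq_zero fun j _ => if_neg (by have := j.isLt; omega)

theorem shiftMatrix_mulVec_apply {n : ℕ} (v : Fin n → R) (i : Fin n) :
    (shiftMatrix n *ᵥ v) i = if h : (i : ℕ) + 1 < n then v ⟨i + 1, h⟩ else 0 := by
  simp only [shiftMatrix, mulVec, dotProduct, of_apply, ite_mul, one_mul, zero_mul]
  exact Fin.sum_ite_val_eq_dite _ v

theorem shiftMatrix_transpose_mulVec_apply {n : ℕ} (v : Fin n → R) (i : Fin n) :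
    ((shiftMatrix n)ᵀ *ᵥ v) i = if h : 0 < (i : ℕ) then v ⟨i - 1, by omega⟩ else 0 := by
  simp only [shiftMatrix, mulVec, dotProduct, transpose_apply, of_apply, ite_mul, one_mul,
    zero_mul]
  have hcond : ∀ j : Fin n, ((i : ℕ) = j + 1) ↔ ((j : ℕ) = i - 1 ∧ 0 < (i : ℕ)) :=
    fun j => by omega
  simp_rw [hcond, ite_and, Fin.sum_ite_val_eq_dite]
  split_ifs <;> first | rfl | omega

theorem dotProduct_shiftMatrix_mulVec {m : ℕ} (v : Fin (m + 1) → R) :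
    v ⬝ᵥ (shiftMatrix (m + 1) *ᵥ v) = ∑ a : Fin m, v a.castSucc * v a.succ := by
  simp [dotProduct, Fin.sum_univ_castSucc, shiftMatrix_mulVec_apply, Fin.succ]

theorem dotProduct_shiftMatrix_transpose_mulVec {m : ℕ} (v : Fin (m + 1) → R) :
    v ⬝ᵥ ((shiftMatrix (m + 1))ᵀ *ᵥ v) = ∑ a : Fin m, v a.castSucc * v a.succ := by
  rw [dotProduct_mulVec, vecMul_transpose, dotProduct_comm, dotProduct_shiftMatrix_mulVec]

theorem Fin.sum_castSucc_sub_succ_sq {m : ℕ} (v : Fin (m + 1) → R) :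
    ∑ a : Fin m, (v a.castSucc - v a.succ) ^ 2 =
      2 * ∑ i, v i ^ 2 - v 0 ^ 2 - v (Fin.last m) ^ 2 -
        2 * ∑ a : Fin m, v a.castSucc * v a.succ := by
  have hl := Fin.sum_univ_castSucc (fun i => v i ^ 2)
  have hr := Fin.sum_univ_succ (fun i => v i ^ 2)
  simp only [sub_sq, Finset.sum_add_distrib, Finset.sum_sub_distrib, mul_assoc,
    ← Finset.mul_sum]
  linear_combination -hl - hr

end Shift

def couplingMatrix (n : ℕ) (k : ℝ) : Matrix (Fin n) (Fin n) ℝ :=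
  -(1 + k) • 1 + shiftMatrix n + k • (shiftMatrix n)ᵀ

theorem couplingMatrix_apply (n : ℕ) (k : ℝ) (i j : Fin n) :
    couplingMatrix n k i j =
      if (i : ℕ) = j then -(1 + k) else if (j : ℕ) = i + 1 then 1
      else if (i : ℕ) = j + 1 then k else 0 := by
  simp only [couplingMatrix, shiftMatrix, Matrix.add_apply, Matrix.smul_apply, one_apply,
    transpose_apply, of_apply, Fin.ext_iff, smul_eq_mul]
  split_ifs <;> first | omega | ring

def travelingWaveFreq (n : ℕ) (k c : ℝ) : Fin n → ℝ :=
  fun i => (if (i : ℕ) = 0 then k * c else 0) + (if (i : ℕ) = n - 1 then c else 0)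

theorem travelingWaveFreq_add_couplingMatrix_mulVec_const (n : ℕ) (k c : ℝ) :
    travelingWaveFreq n k c + couplingMatrix n k *ᵥ (fun _ => c) = 0 := by
  ext i
  have := i.isLt
  simp only [couplingMatrix, add_mulVec, smul_mulVec, one_mulVec, Pi.add_apply, Pi.smul_apply,
    smul_eq_mul, shiftMatrix_mulVec_apply, shiftMatrix_transpose_mulVec_apply, travelingWaveFreq,
    Pi.zero_apply]
  split_ifs <;> first | omega | ring

theorem travelingWaveFreq_add_couplingMatrix_mulVec (n : ℕ) (k c : ℝ) (v : Fin n → ℝ) :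
    travelingWaveFreq n k c + couplingMatrix n k *ᵥ v =
      couplingMatrix n k *ᵥ (v - fun _ => c) := by
  rw [mulVec_sub,
    eq_neg_of_add_eq_zero_left (travelingWaveFreq_add_couplingMatrix_mulVec_const n k c)]
  abel

theorem dotProduct_couplingMatrix_mulVec (m : ℕ) (k : ℝ) (v : Fin (m + 1) → ℝ) :
    v ⬝ᵥ (couplingMatrix (m + 1) k *ᵥ v) =
      -((k + 1) / 2) *
        (v 0 ^ 2 + v (Fin.last m) ^ 2 + ∑ a : Fin m, (v a.castSucc - v a.succ) ^ 2) := by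
  simp only [couplingMatrix, add_mulVec, smul_mulVec, one_mulVec, dotProduct_add, dotProduct_smul,
    smul_eq_mul, dotProduct_shiftMatrix_mulVec, dotProduct_shiftMatrix_transpose_mulVec,
    Fin.sum_castSucc_sub_succ_sq]
  simp only [dotProduct, pow_two]
  ring

theorem hasDerivAt_lyapunovE {N : ℕ} {Γ : ℝ → ℝ} (hΓ : Continuous Γ) (δ : ℝ)
    {x : ℝ → Fin N → ℝ} {x' : Fin N → ℝ} {t : ℝ} (hx : ∀ i, HasDerivAt (fun s => x s i) (x' i) t) :
    HasDerivAt (fun s => lyapunovE N Γ δ (x s)) ((fun i => Γ (x t i) - Γ δ) ⬝ᵥ x') t := by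
  refine HasDerivAt.fun_sum fun i _ => ?_
  have hint := (hΓ.integral_hasStrictDerivAt 0 (x t i)).hasDerivAt.comp t (hx i)
  exact (hint.sub ((hx i).const_mul (Γ δ))).congr_deriv (by ring)

/-- Along any solution of the phase-difference system
`ẋ = Ω^δ + CΓ(x)` with the traveling-wave frequency vector `Ω^δ`, the
Lyapunov functional `E` satisfies
`dE/dt = −((k+1)/2)((Γ(x₁)−Γ(δ))² + (Γ(x_N)−Γ(δ))² + Σ(Γ(xᵢ)−Γ(xᵢ₊₁))²)`. -/
theorem energy_derivative (N : ℕ) (hN : 1 ≤ N) (k δ : ℝ) (Γ : ℝ → ℝ)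
    (hΓ : Continuous Γ)
    (C : Matrix (Fin N) (Fin N) ℝ)
    (hC : ∀ i j : Fin N, C i j =
      if (i : ℕ) = (j : ℕ) then -(1 + k)
      else if (j : ℕ) = (i : ℕ) + 1 then 1
      else if (i : ℕ) = (j : ℕ) + 1 then k else 0)
    (Ω : Fin N → ℝ)
    (hΩ : ∀ i : Fin N, Ω i =
      (if (i : ℕ) = 0 then k * Γ δ else 0) + (if (i : ℕ) = N - 1 then Γ δ else 0))
    (x : ℝ → Fin N → ℝ)
    (hx : ∀ (t : ℝ) (i : Fin N),
      HasDerivAt (fun s => x s i) (Ω i + (C *ᵥ fun j => Γ (x t j)) i) t) :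
    ∀ t : ℝ,
      HasDerivAt (fun s => lyapunovE N Γ δ (x s))
        (-((k + 1) / 2) *
          ((Γ (x t ⟨0, hN⟩) - Γ δ) ^ 2 + (Γ (x t ⟨N - 1, by omega⟩) - Γ δ) ^ 2 +
            ∑ i : Fin (N - 1),
              (Γ (x t ⟨(i : ℕ), by have := i.isLt; omega⟩) -
               Γ (x t ⟨(i : ℕ) + 1, by have := i.isLt; omega⟩)) ^ 2)) t := by
  intro t
  obtain ⟨m, rfl⟩ : ∃ m, N = m + 1 := ⟨N - 1, by omega⟩
  obtain rfl : C = couplingMatrix (m + 1) k := by ext i j; rw [hC, couplingMatrix_apply]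
  obtain rfl : Ω = travelingWaveFreq (m + 1) k (Γ δ) := funext hΩ
  convert hasDerivAt_lyapunovE hΓ δ (hx t) using 1
  change _ = _ ⬝ᵥ (travelingWaveFreq (m + 1) k (Γ δ) + couplingMatrix (m + 1) k *ᵥ _)
  rw [travelingWaveFreq_add_couplingMatrix_mulVec, Pi.sub_def, dotProduct_couplingMatrix_mulVec]
  simp only [sub_sub_sub_cancel_right]
  rfl
end

section
/- Let N ≥ 1, let k > −1 and δ be real, and let Γ: ℝ → ℝ. Let C be the N×N real tridiagonal matrix with all diagonal entries −(1+k), all superdiagonal entries 1, and all subdiagonal entries k, and let Ω^δ ∈ ℝ^N be defined by Ω₁ = kΓ(δ), Ωᵢ = 0 for 2 ≤ i ≤ N−1, and Ω_N = Γ(δ). Then a point x* ∈ ℝ^N satisfies Ω^δ + CΓ(x*) = 0 (i.e. x* is an equilibrium of the phase-difference system) if and only if Γ(x*ᵢ) = Γ(δ) for all i = 1,…,N. -/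
open Matrix

private lemma row_lemma (N : ℕ) (k : ℝ) (C : Matrix (Fin N) (Fin N) ℝ)
    (hC : ∀ i j : Fin N, C i j =
      if (i : ℕ) = (j : ℕ) then -(1 + k)
      else if (j : ℕ) = (i : ℕ) + 1 then 1
      else if (i : ℕ) = (j : ℕ) + 1 then k else 0)
    (V : ℕ → ℝ) (hV0 : ∀ n, N ≤ n → V n = 0)
    (v : Fin N → ℝ) (hv : ∀ j : Fin N, v j = V j)
    (i : Fin N) :
    (C *ᵥ v) i = V ((i : ℕ) + 1) - (1 + k) * V i
      + (if (i : ℕ) = 0 then 0 else k * V ((i : ℕ) - 1)) := by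
  have h1 : (C *ᵥ v) i = ∑ n ∈ Finset.range N,
      ((if n = (i : ℕ) then -(1 + k) * V n else 0)
        + (if n = (i : ℕ) + 1 then V n else 0)
        + (if (i : ℕ) = n + 1 then k * V n else 0)) := by
    rw [Matrix.mulVec, dotProduct, ← Fin.sum_univ_eq_sum_range
      (fun n => (if n = (i : ℕ) then -(1 + k) * V n else 0)
        + (if n = (i : ℕ) + 1 then V n else 0)
        + (if (i : ℕ) = n + 1 then k * V n else 0))]
    refine Finset.sum_congr rfl (fun j _ => ?_)
    rw [hC, hv]
    split_ifs <;> first | omega | ring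
  rw [h1, Finset.sum_add_distrib, Finset.sum_add_distrib,
    Finset.sum_ite_eq' (Finset.range N), Finset.sum_ite_eq' (Finset.range N)]
  have h2 : (if (i : ℕ) ∈ Finset.range N then -(1 + k) * V i else 0) = -(1 + k) * V i := by
    rw [if_pos (Finset.mem_range.2 i.2)]
  have h3 : (if (i : ℕ) + 1 ∈ Finset.range N then V ((i : ℕ) + 1) else 0) = V ((i : ℕ) + 1) := by
    by_cases h : (i : ℕ) + 1 < N
    · rw [if_pos (Finset.mem_range.2 h)]
    · rw [if_neg (by simpa using h), hV0 _ (by omega)]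
  have h4 : (∑ n ∈ Finset.range N, if (i : ℕ) = n + 1 then k * V n else 0)
      = (if (i : ℕ) = 0 then 0 else k * V ((i : ℕ) - 1)) := by
    by_cases h0 : (i : ℕ) = 0
    · rw [if_pos h0]
      refine Finset.sum_eq_zero (fun n _ => ?_)
      rw [if_neg (by omega)]
    · rw [if_neg h0]
      have : ∀ n ∈ Finset.range N, (if (i : ℕ) = n + 1 then k * V n else 0)
          = (if n = (i : ℕ) - 1 then k * V n else 0) := by
        intro n _
        congr 1
        simp only [eq_iff_iff]
        omega
      rw [Finset.sum_congr rfl this, Finset.sum_ite_eq' (Finset.range N),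
        if_pos (Finset.mem_range.2 (by omega))]
  rw [h2, h3, h4]
  ring


/-- For `k > −1`, a point `x*` is an equilibrium of the
phase-difference system `ẋ = Ω^δ + CΓ(x)` (with the traveling-wave frequency
vector `Ω^δ`) if and only if `Γ(x*ᵢ) = Γ(δ)` for all `i`. -/
theorem equilibrium_characterization (N : ℕ) (hN : 1 ≤ N) (k δ : ℝ) (hk : -1 < k)
    (Γ : ℝ → ℝ)
    (C : Matrix (Fin N) (Fin N) ℝ)
    (hC : ∀ i j : Fin N, C i j =
      if (i : ℕ) = (j : ℕ) then -(1 + k)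
      else if (j : ℕ) = (i : ℕ) + 1 then 1
      else if (i : ℕ) = (j : ℕ) + 1 then k else 0)
    (Ω : Fin N → ℝ)
    (hΩ : ∀ i : Fin N, Ω i =
      (if (i : ℕ) = 0 then k * Γ δ else 0) + (if (i : ℕ) = N - 1 then Γ δ else 0))
    (xs : Fin N → ℝ) :
    Ω + C *ᵥ (fun i => Γ (xs i)) = 0 ↔ ∀ i, Γ (xs i) = Γ δ := by
  constructor
  · intro heq
    set V : ℕ → ℝ := fun n => if h : n < N then Γ (xs ⟨n, h⟩) else 0 with hVdef
    have hV0 : ∀ n, N ≤ n → V n = 0 := by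
      intro n h; simp [hVdef, Nat.not_lt.2 h]
    have hv : ∀ j : Fin N, Γ (xs j) = V j := by
      intro j; simp [hVdef, j.2]
    set W : ℕ → ℝ := fun n => V n - (if n < N then Γ δ else 0) with hWdef
    have hWN0 : ∀ n, N ≤ n → W n = 0 := by
      intro n h; simp [hWdef, hV0 n h, Nat.not_lt.2 h]
    have key : ∀ i : Fin N, Ω i + (C *ᵥ fun i => Γ (xs i)) i = 0 := by
      intro i
      have := congrFun heq i
      simpa using this
    have star : ∀ n, n < N →
        W (n + 1) - (1 + k) * W n + (if n = 0 then 0 else k * W (n - 1)) = 0 := by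
      intro n hn
      have h := key ⟨n, hn⟩
      rw [row_lemma N k C hC V hV0 _ (fun j => hv j) ⟨n, hn⟩, hΩ ⟨n, hn⟩] at h
      simp only at h
      have e1 : V n = W n + Γ δ := by simp [hWdef, hn]
      have e2 : V (n + 1) = W (n + 1) + (if n + 1 < N then Γ δ else 0) := by
        simp [hWdef]
      have e3 : V (n - 1) = W (n - 1) + (if n - 1 < N then Γ δ else 0) := by
        simp [hWdef]
      rw [e1, e2, e3] at h
      by_cases h0 : n = 0
      · subst h0
        rw [if_pos rfl] at h ⊢
        rw [if_pos rfl] at h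
        by_cases h1 : 1 < N
        · rw [if_pos (show (0 : ℕ) + 1 < N from h1),
            if_neg (show ¬((0 : ℕ) = N - 1) by omega)] at h
          linarith
        · rw [if_neg (show ¬((0 : ℕ) + 1 < N) from h1),
            if_pos (show (0 : ℕ) = N - 1 by omega)] at h
          have hW1 : W 1 = 0 := hWN0 1 (by omega)
          rw [hW1]
          rw [hW1] at h
          linarith
      · rw [if_neg h0] at h ⊢
        rw [if_neg h0, if_pos (show n - 1 < N by omega)] at h
        by_cases h1 : n + 1 < N
        · rw [if_pos h1, if_neg (show ¬(n = N - 1) by omega)] at h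
          linarith
        · rw [if_neg h1, if_pos (show n = N - 1 by omega)] at h
          have hWn1 : W (n + 1) = 0 := hWN0 (n + 1) (by omega)
          rw [hWn1] at h ⊢
          linarith
    set s : ℕ → ℝ := fun n => ∑ j ∈ Finset.range (n + 1), k ^ j with hsdef
    have hs0 : s 0 = 1 := by simp [hsdef]
    have hsucc : ∀ n, s (n + 1) = s n + k ^ (n + 1) := by
      intro n; simp [hsdef, Finset.sum_range_succ]
    have hsrec : ∀ n, (1 + k) * s n - (if n = 0 then 0 else k * s (n - 1)) = s (n + 1) := by
      intro n
      cases n with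
      | zero => rw [if_pos rfl, hsucc 0, hs0]; ring
      | succ m =>
        rw [if_neg (Nat.succ_ne_zero m)]
        simp only [Nat.add_sub_cancel]
        have h1 := hsucc m
        have h2 := hsucc (m + 1)
        have hp : k ^ (m + 2) = k * k ^ (m + 1) := by ring
        rw [h2, h1, hp]
        ring
    have hspos : ∀ n, 0 < s n := by
      intro n
      rcases lt_or_ge k 1 with h1 | h1
      · rw [hsdef]
        simp only
        rw [geom_sum_eq (ne_of_lt h1)]
        have hlt : k ^ (n + 1) < 1 := by
          calc k ^ (n + 1) ≤ |k| ^ (n + 1) := by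
                rw [← abs_pow]; exact le_abs_self _
            _ < 1 := pow_lt_one₀ (abs_nonneg k) (abs_lt.2 ⟨hk, h1⟩) (Nat.succ_ne_zero n)
        apply div_pos_of_neg_of_neg <;> linarith
      · refine Finset.sum_pos (fun j _ => pow_pos (by linarith) j) ?_
        exact Finset.nonempty_range_iff.2 (Nat.succ_ne_zero n)
    have hWi : ∀ n, n < N → W n = s n * W 0 := by
      intro n
      induction n using Nat.strong_induction_on with
      | _ n ih =>
        intro hn
        cases n with
        | zero => rw [hs0]; ring
        | succ m =>
          have hm : m < N := by omega
          have hst := star m hm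
          have hWm1 : W (m + 1) = (1 + k) * W m - (if m = 0 then 0 else k * W (m - 1)) := by
            linarith
          rw [hWm1, ih m (by omega) hm]
          by_cases h0 : m = 0
          · subst h0
            rw [if_pos rfl, ← hsrec 0, if_pos rfl, hs0]
            ring
          · rw [if_neg h0, ih (m - 1) (by omega) (by omega), ← hsrec m, if_neg h0]
            ring
    have hfin := star (N - 1) (by omega)
    have hWN : W (N - 1 + 1) = 0 := hWN0 _ (by omega)
    have hrec := hsrec (N - 1)
    rw [hWi (N - 1) (by omega)] at hfin
    have hsN : s (N - 1 + 1) * W 0 = 0 := by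
      by_cases h0 : N - 1 = 0
      · rw [if_pos h0] at hfin hrec
        rw [← hrec]
        linear_combination hWN - hfin
      · rw [if_neg h0, hWi (N - 1 - 1) (by omega)] at hfin
        rw [if_neg h0] at hrec
        rw [← hrec]
        linear_combination hWN - hfin
    have hW0 : W 0 = 0 := by
      rcases mul_eq_zero.1 hsN with h | h
      · exact absurd h (ne_of_gt (hspos (N - 1 + 1)))
      · exact h
    intro i
    have hWi' : W (i : ℕ) = 0 := by rw [hWi _ i.2, hW0]; ring
    have hVi : V (i : ℕ) = Γ δ := by
      rw [hWdef] at hWi'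
      simp only [if_pos i.2] at hWi'
      linarith
    rw [hv i, hVi]
  · intro hall
    have hg : (fun i : Fin N => Γ (xs i)) = fun i : Fin N =>
        (fun n : ℕ => if n < N then Γ δ else 0) (i : ℕ) := by
      funext i
      simp [hall i, i.2]
    funext i
    simp only [Pi.add_apply, Pi.zero_apply]
    rw [hg, row_lemma N k C hC (fun n => if n < N then Γ δ else 0)
      (fun n h => by simp [Nat.not_lt.2 h]) _ (fun j => rfl) i, hΩ i]
    have hiN : (i : ℕ) < N := i.2
    by_cases h0 : (i : ℕ) = 0
    · rw [if_pos h0, if_pos h0, if_pos hiN]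
      by_cases h1 : (i : ℕ) + 1 < N
      · rw [if_pos h1, if_neg (show ¬((i : ℕ) = N - 1) by omega)]
        ring
      · rw [if_neg h1, if_pos (show (i : ℕ) = N - 1 by omega)]
        ring
    · rw [if_neg h0, if_neg h0, if_pos hiN,
        if_pos (show (i : ℕ) - 1 < N by omega)]
      by_cases h1 : (i : ℕ) + 1 < N
      · rw [if_pos h1, if_neg (show ¬((i : ℕ) = N - 1) by omega)]
        ring
      · rw [if_neg h1, if_pos (show (i : ℕ) = N - 1 by omega)]
        ring
end

section
/- Let N ≥ 1, let k > −1 be real, and let C be the N×N real tridiagonal matrix with all diagonal entries −(1+k), all superdiagonal entries 1, and all subdiagonal entries k. Let Ω ∈ ℝ^N be such that every component of the vector −C⁻¹Ω lies in the open interval (−1, 1). Then the set { x ∈ [0, 2π)^N : Ω + C·(sin x₁, …, sin x_N)ᵀ = 0 } has exactly 2^N elements. -/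
open Matrix

noncomputable def ceqAux_Tmat (k : ℝ) (n : ℕ) : Matrix (Fin n) (Fin n) ℝ :=
  fun i j => if (i : ℕ) = (j : ℕ) then -(1 + k)
      else if (j : ℕ) = (i : ℕ) + 1 then 1
      else if (i : ℕ) = (j : ℕ) + 1 then k else 0

lemma ceqAux_sub1 (k : ℝ) (n : ℕ) :
    (ceqAux_Tmat k (n+2)).submatrix Fin.succ Fin.succ = ceqAux_Tmat k (n+1) := by
  ext i j
  simp [ceqAux_Tmat, submatrix]

lemma ceqAux_sub2det (k : ℝ) (n : ℕ) :
    ((ceqAux_Tmat k (n+2)).submatrix Fin.succ (Fin.succAbove 1)).det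
      = k * (ceqAux_Tmat k n).det := by
  rw [det_succ_column_zero]
  simp [Fin.sum_univ_succ, ceqAux_Tmat, Fin.succAbove, Fin.lt_def]
  left
  congr 1
  ext i j
  simp [ceqAux_Tmat, submatrix, Fin.succAbove, Fin.lt_def]

lemma ceqAux_Tdet_rec (k : ℝ) (n : ℕ) :
    (ceqAux_Tmat k (n+2)).det
      = -(1+k) * (ceqAux_Tmat k (n+1)).det - k * (ceqAux_Tmat k n).det := by
  rw [det_succ_row_zero]
  simp [Fin.sum_univ_succ, ceqAux_Tmat]
  rw [ceqAux_sub1, ceqAux_sub2det]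
  ring

lemma ceqAux_Tdet (k : ℝ) (n : ℕ) :
    (ceqAux_Tmat k n).det = (-1)^n * ∑ j ∈ Finset.range (n+1), k^j := by
  induction n using Nat.twoStepInduction with
  | zero => simp
  | one => simp [ceqAux_Tmat, show (Finset.range 2) = {0, 1} from rfl]
  | more n ih1 ih2 =>
    rw [ceqAux_Tdet_rec, ih1, ih2]
    rw [Finset.sum_range_succ (n := n+2), Finset.sum_range_succ (n := n+1)]
    ring

lemma ceqAux_geom_pos (k : ℝ) (hk : -1 < k) (n : ℕ) :
    0 < ∑ j ∈ Finset.range (n+1), k^j :=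
  geom_sum_pos' (by linarith) (by omega)

lemma ceqAux_Tdet_ne (k : ℝ) (hk : -1 < k) (n : ℕ) : (ceqAux_Tmat k n).det ≠ 0 := by
  rw [ceqAux_Tdet]
  have := ceqAux_geom_pos k hk n
  have h2 : (-1:ℝ)^n ≠ 0 := by positivity
  positivity

lemma ceqAux_sin_sol_set (c : ℝ) (hc1 : -1 < c) (hc2 : c < 1) :
    {t : ℝ | t ∈ Set.Ico (0:ℝ) (2*Real.pi) ∧ Real.sin t = c} =
    {(if 0 ≤ Real.arcsin c then Real.arcsin c else Real.arcsin c + 2*Real.pi),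
      Real.pi - Real.arcsin c} := by
  have hpi := Real.pi_pos
  set a := Real.arcsin c with ha
  have ha1 : -(Real.pi/2) < a := Real.neg_pi_div_two_lt_arcsin.mpr hc1
  have ha2 : a < Real.pi/2 := Real.arcsin_lt_pi_div_two.mpr hc2
  have hsa : Real.sin a = c := Real.sin_arcsin hc1.le hc2.le
  ext t
  simp only [Set.mem_setOf_eq, Set.mem_insert_iff, Set.mem_singleton_iff, Set.mem_Ico]
  constructor
  · rintro ⟨⟨ht0, ht2⟩, hst⟩
    rcases le_or_gt t (Real.pi/2) with h1 | h1
    · have : t = a := Real.injOn_sin ⟨by linarith, h1⟩ ⟨ha1.le, ha2.le⟩ (by rw [hst, hsa])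
      left; rw [if_pos (by linarith [this ▸ ht0])]; exact this
    · rcases le_or_gt t (3*Real.pi/2) with h2 | h2
      · have : Real.pi - t = a := Real.injOn_sin ⟨by linarith, by linarith⟩ ⟨ha1.le, ha2.le⟩
          (by rw [Real.sin_pi_sub, hst, hsa])
        right; linarith
      · have : t - 2*Real.pi = a := Real.injOn_sin ⟨by linarith, by linarith⟩ ⟨ha1.le, ha2.le⟩
          (by rw [Real.sin_sub_two_pi, hst, hsa])
        left; rw [if_neg (by linarith)]; linarith
  · rintro (h | h)
    · by_cases h0 : 0 ≤ a
      · rw [if_pos h0] at h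
        subst h; exact ⟨⟨h0, by linarith⟩, hsa⟩
      · rw [if_neg h0] at h
        subst h
        refine ⟨⟨by linarith, by linarith⟩, ?_⟩
        rw [Real.sin_add_two_pi, hsa]
    · subst h
      exact ⟨⟨by linarith, by linarith⟩, by rw [Real.sin_pi_sub, hsa]⟩

lemma ceqAux_sin_sol_ncard (c : ℝ) (hc1 : -1 < c) (hc2 : c < 1) :
    Set.ncard {t : ℝ | t ∈ Set.Ico (0:ℝ) (2*Real.pi) ∧ Real.sin t = c} = 2 := by
  have hpi := Real.pi_pos
  have ha1 : -(Real.pi/2) < Real.arcsin c := Real.neg_pi_div_two_lt_arcsin.mpr hc1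
  have ha2 : Real.arcsin c < Real.pi/2 := Real.arcsin_lt_pi_div_two.mpr hc2
  rw [ceqAux_sin_sol_set c hc1 hc2]
  apply Set.ncard_pair
  split_ifs with h
  · intro he; rw [he] at *; linarith
  · intro he; linarith

/-- For `k > −1` and `Γ = sin`, if every component of `−C⁻¹Ω`
lies in `(−1, 1)`, then the phase-difference system `ẋ = Ω + C·sin(x)` has
exactly `2^N` equilibria with all components in `[0, 2π)`. -/
theorem count_equilibria (N : ℕ) (hN : 1 ≤ N) (k : ℝ) (hk : -1 < k)
    (C : Matrix (Fin N) (Fin N) ℝ)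
    (hC : ∀ i j : Fin N, C i j =
      if (i : ℕ) = (j : ℕ) then -(1 + k)
      else if (j : ℕ) = (i : ℕ) + 1 then 1
      else if (i : ℕ) = (j : ℕ) + 1 then k else 0)
    (Ω : Fin N → ℝ)
    (hbound : ∀ i : Fin N, (-(C⁻¹ *ᵥ Ω)) i ∈ Set.Ioo (-1 : ℝ) 1) :
    Set.ncard {x : Fin N → ℝ |
        (∀ i, x i ∈ Set.Ico (0 : ℝ) (2 * Real.pi)) ∧
        Ω + C *ᵥ (fun i => Real.sin (x i)) = 0} = 2 ^ N := by
  have hCT : C = ceqAux_Tmat k N := by ext i j; rw [hC]; rfl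
  have hdet : C.det ≠ 0 := hCT ▸ ceqAux_Tdet_ne k hk N
  have hunit : IsUnit C.det := isUnit_iff_ne_zero.mpr hdet
  set b : Fin N → ℝ := -(C⁻¹ *ᵥ Ω) with hb
  have key : ∀ x : Fin N → ℝ,
      (Ω + C *ᵥ (fun i => Real.sin (x i)) = 0) ↔ (∀ i, Real.sin (x i) = b i) := by
    intro x
    constructor
    · intro h i
      have h1 : C *ᵥ (fun i => Real.sin (x i)) = -Ω := by
        have := congrArg (fun v => v - Ω) h
        simpa [add_sub_cancel_left] using this
      have h2 : (fun i => Real.sin (x i)) = C⁻¹ *ᵥ (-Ω) := by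
        rw [← h1, mulVec_mulVec, nonsing_inv_mul C hunit, one_mulVec]
      have := congrFun h2 i
      simpa [hb, mulVec_neg] using this
    · intro h
      have h2 : (fun i => Real.sin (x i)) = b := funext h
      rw [h2, hb]
      have : C *ᵥ -(C⁻¹ *ᵥ Ω) = -Ω := by
        rw [mulVec_neg, mulVec_mulVec, mul_nonsing_inv C hunit, one_mulVec]
      rw [this]; simp
  have hset : {x : Fin N → ℝ |
        (∀ i, x i ∈ Set.Ico (0 : ℝ) (2 * Real.pi)) ∧
        Ω + C *ᵥ (fun i => Real.sin (x i)) = 0}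
      = Set.pi Set.univ
          (fun i => {t : ℝ | t ∈ Set.Ico (0:ℝ) (2*Real.pi) ∧ Real.sin t = b i}) := by
    ext x
    simp only [Set.mem_setOf_eq, Set.mem_pi, Set.mem_univ, forall_true_left, key]
    exact ⟨fun ⟨h1,h2⟩ => fun i => ⟨h1 i, h2 i⟩,
      fun h => ⟨fun i => (h i).1, fun i => (h i).2⟩⟩
  rw [hset]
  have hfin : ∀ i : Fin N,
      ({t : ℝ | t ∈ Set.Ico (0:ℝ) (2*Real.pi) ∧ Real.sin t = b i}).ncard = 2 :=
    fun i => ceqAux_sin_sol_ncard (b i) (hbound i).1 (hbound i).2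
  rw [← Nat.card_coe_set_eq]
  rw [Nat.card_congr (Equiv.Set.univPi _)]
  rw [Nat.card_pi]
  have : ∀ i : Fin N,
      Nat.card ({t : ℝ | t ∈ Set.Ico (0:ℝ) (2*Real.pi) ∧ Real.sin t = b i}) = 2 := by
    intro i
    rw [Nat.card_coe_set_eq, hfin i]
  simp only [this]
  simp
end

section
/- Let N ≥ 1, let k > −1 be real, let δ ∈ (0, π/2), and take Γ = sin. Let C be the N×N real tridiagonal matrix with all diagonal entries −(1+k), all superdiagonal entries 1, and all subdiagonal entries k, let Ω^δ ∈ ℝ^N be defined by Ω₁ = k sin δ, Ωᵢ = 0 for 2 ≤ i ≤ N−1, Ω_N = sin δ, and let x* ∈ ℝ^N be an equilibrium, i.e. each component of x* equals δ or π−δ. Then there exist a constant c₀ > 0 and an open neighborhood U of x* such that for all x ∈ U: Σ_{i=1}^N (sin xᵢ − sin δ)·(Ω^δ + C·(sin x₁,…,sin x_N)ᵀ)ᵢ ≤ −c₀·‖x − x*‖². -/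
/-!
Write `vᵢ = sin xᵢ - sin δ`. The constant vector `sin δ · 𝟙` is an equilibrium of the affine
field (`Ω^δ + C (sin δ · 𝟙) = 0`: the row sums of `C` vanish except in the two boundary rows),
so the energy derivative is the quadratic form `vᵀ C v = -(1 + k) (∑ vᵢ² - ∑ vᵢ vᵢ₊₁)`.
Extending `v` by `v_N = 0`, twice the bracket is `v₀² + ∑ (vᵢ₊₁ - vᵢ)²`, which by a discrete
Poincaré inequality dominates `∑ vᵢ² / N²`. Finally `|cos x*ᵢ| = cos δ > 0`, so near `x*` the
mean value theorem gives `|vᵢ| ≥ (cos δ / 2) |xᵢ - x*ᵢ|`.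
-/

open Finset Matrix

lemma mul_abs_sub_le_abs_sin_sub_sin {a b m : ℝ} (h : ∀ u ∈ Set.uIcc a b, m ≤ |Real.cos u|) :
    m * |b - a| ≤ |Real.sin b - Real.sin a| := by
  wlog hab : a < b generalizing a b
  · rcases (not_lt.mp hab).eq_or_lt with rfl | hba
    · simp
    · simpa only [abs_sub_comm] using this (Set.uIcc_comm a b ▸ h) hba
  obtain ⟨c, hc, hslope⟩ := exists_hasDerivAt_eq_slope Real.sin Real.cos hab
    Real.continuous_sin.continuousOn fun u _ => Real.hasDerivAt_sin u
  rw [eq_div_iff (sub_ne_zero.mpr hab.ne')] at hslope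
  rw [← hslope, abs_mul]
  exact mul_le_mul_of_nonneg_right (h c (Set.Icc_subset_uIcc (Set.Ioo_subset_Icc_self hc)))
    (abs_nonneg _)

lemma abs_cos_div_two_mul_le_abs_sin_sub_sin {a x : ℝ} (hx : |x - a| ≤ |Real.cos a| / 2) :
    |Real.cos a| / 2 * |x - a| ≤ |Real.sin x - Real.sin a| := by
  refine mul_abs_sub_le_abs_sin_sub_sin fun u hu => ?_
  have hua : |u - a| ≤ |x - a| := Set.abs_sub_left_of_mem_uIcc hu
  have hcos : |Real.cos a| - |Real.cos u| ≤ |u - a| :=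
    (abs_sub_abs_le_abs_sub _ _).trans (abs_sub_comm (Real.cos a) _ ▸ Real.abs_cos_sub_cos_le u a)
  linarith

lemma sum_range_sq_le_sq_mul_sum_sq_sub {w : ℕ → ℝ} {n : ℕ} (hw : w n = 0) :
    ∑ j ∈ range n, w j ^ 2 ≤ n ^ 2 * ∑ i ∈ range n, (w (i + 1) - w i) ^ 2 := by
  set D := ∑ i ∈ range n, (w (i + 1) - w i) ^ 2
  have hpoint : ∀ j ∈ range n, w j ^ 2 ≤ n * D := by
    intro j hj
    have hjn : j ≤ n := (mem_range.mp hj).le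
    have htel : w j = -∑ i ∈ Ico j n, (w (i + 1) - w i) := by
      rw [sum_Ico_sub w hjn, hw]; ring
    calc w j ^ 2 ≤ #(Ico j n) * ∑ i ∈ Ico j n, (w (i + 1) - w i) ^ 2 := by
          rw [htel, neg_sq]; exact sq_sum_le_card_mul_sum_sq
      _ ≤ n * D := by
          gcongr
          · simp
          · exact sum_le_sum_of_subset_of_nonneg (fun i hi => mem_range.2 (mem_Ico.1 hi).2)
              fun _ _ _ => sq_nonneg _
  calc ∑ j ∈ range n, w j ^ 2 ≤ ∑ _j ∈ range n, n * D := sum_le_sum hpoint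
    _ = n ^ 2 * D := by rw [sum_const, card_range, nsmul_eq_mul]; ring

lemma two_mul_sum_sq_sub_sum_mul_succ {w : ℕ → ℝ} {n : ℕ} (hw : w n = 0) :
    2 * (∑ i ∈ range n, w i ^ 2 - ∑ i ∈ range n, w i * w (i + 1)) =
      w 0 ^ 2 + ∑ i ∈ range n, (w (i + 1) - w i) ^ 2 := by
  have hshift : ∑ i ∈ range n, w (i + 1) ^ 2 = ∑ i ∈ range n, w i ^ 2 - w 0 ^ 2 := by
    have := sum_range_succ' (fun i => w i ^ 2) n
    rw [sum_range_succ, hw] at this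
    linarith
  have hexpand : ∑ i ∈ range n, (w (i + 1) - w i) ^ 2 = ∑ i ∈ range n, w (i + 1) ^ 2 +
      ∑ i ∈ range n, w i ^ 2 - 2 * ∑ i ∈ range n, w i * w (i + 1) := by
    rw [mul_sum, ← sum_add_distrib, ← sum_sub_distrib]
    exact sum_congr rfl fun _ _ => by ring
  rw [hexpand, hshift]; ring

lemma sum_sq_le_two_mul_sq_mul_sum_sq_sub_sum_mul_succ {w : ℕ → ℝ} {n : ℕ} (hw : w n = 0) :
    ∑ i ∈ range n, w i ^ 2 ≤
      2 * n ^ 2 * (∑ i ∈ range n, w i ^ 2 - ∑ i ∈ range n, w i * w (i + 1)) := by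
  rw [mul_comm 2, mul_assoc, two_mul_sum_sq_sub_sum_mul_succ hw]
  have := sum_range_sq_le_sq_mul_sum_sq_sub hw
  nlinarith [mul_nonneg (sq_nonneg (n : ℝ)) (sq_nonneg (w 0))]

def tridiagCoeff (k : ℝ) (i j : ℕ) : ℝ :=
  if i = j then -(1 + k) else if j = i + 1 then 1 else if i = j + 1 then k else 0

lemma tridiagCoeff_eq (k : ℝ) (i j : ℕ) : tridiagCoeff k i j =
    (if j = i then -(1 + k) else 0) + (if j = i + 1 then 1 else 0) +
      (if i = j + 1 then k else 0) := by
  unfold tridiagCoeff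
  split_ifs <;> first | omega | ring

lemma sum_mul_tridiagCoeff_mul {w : ℕ → ℝ} {n : ℕ} (hw : w n = 0) (k : ℝ) :
    ∑ i ∈ range n, ∑ j ∈ range n, w i * tridiagCoeff k i j * w j =
      -(1 + k) * (∑ i ∈ range n, w i ^ 2 - ∑ i ∈ range n, w i * w (i + 1)) := by
  simp only [tridiagCoeff_eq, mul_add, add_mul, sum_add_distrib, mul_ite, ite_mul, mul_zero,
    zero_mul, sum_ite_eq']
  -- the subdiagonal part is the superdiagonal one transposed
  rw [sum_comm (f := fun i j => if i = j + 1 then w i * k * w j else 0)]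
  simp only [sum_ite_eq', mul_sub, mul_sum, ← sum_add_distrib, ← sum_sub_distrib]
  refine sum_congr rfl fun i hi => ?_
  split_ifs with h
  · ring
  · rw [show i + 1 = n by simp only [mem_range] at hi h; omega, hw]; ring

lemma sum_tridiagCoeff (k : ℝ) {n i : ℕ} (hi : i < n) :
    ∑ j ∈ range n, tridiagCoeff k i j =
      -((if i = 0 then k else 0) + (if i = n - 1 then 1 else 0)) := by
  simp only [tridiagCoeff_eq, sum_add_distrib, sum_ite_eq', mem_range, hi, if_true]
  rcases i with _ | i
  · simp only [Nat.right_eq_add, add_eq_zero, one_ne_zero, and_false, if_false, sum_const_zero]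
    split_ifs <;> first | omega | ring
  · simp only [Nat.add_right_cancel_iff, sum_ite_eq, mem_range, add_eq_zero, one_ne_zero,
      and_false, if_false]
    split_ifs <;> first | omega | ring

lemma sq_norm_le_sum_sq_norm {ι : Type*} [Fintype ι] {E : ι → Type*}
    [∀ i, SeminormedAddCommGroup (E i)] (y : ∀ i, E i) : ‖y‖ ^ 2 ≤ ∑ i, ‖y i‖ ^ 2 := by
  have hsum : 0 ≤ ∑ i, ‖y i‖ ^ 2 := sum_nonneg fun _ _ => sq_nonneg _
  refine (Real.le_sqrt (norm_nonneg _) hsum).1 <| (pi_norm_le_iff_of_nonneg (Real.sqrt_nonneg _)).2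
    fun i => ?_
  simpa using Real.abs_le_sqrt (single_le_sum (fun j _ => sq_nonneg ‖y j‖) (mem_univ i))

lemma sin_eq_and_abs_cos_eq_of_eq_or_eq_pi_sub {y δ : ℝ} (h : y = δ ∨ y = Real.pi - δ) :
    Real.sin y = Real.sin δ ∧ |Real.cos y| = |Real.cos δ| := by
  rcases h with rfl | rfl
  · exact ⟨rfl, rfl⟩
  · exact ⟨Real.sin_pi_sub δ, by rw [Real.cos_pi_sub, abs_neg]⟩

lemma sq_mul_sq_norm_sub_le_sum_sq_sin_sub_sin {ι : Type*} [Fintype ι] {δ : ℝ} {xs x : ι → ℝ}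
    (hxs : ∀ i, xs i = δ ∨ xs i = Real.pi - δ) (hx : ‖x - xs‖ ≤ |Real.cos δ| / 2) :
    (|Real.cos δ| / 2) ^ 2 * ‖x - xs‖ ^ 2 ≤ ∑ i, (Real.sin (x i) - Real.sin δ) ^ 2 := by
  calc (|Real.cos δ| / 2) ^ 2 * ‖x - xs‖ ^ 2
      ≤ (|Real.cos δ| / 2) ^ 2 * ∑ i, ‖x i - xs i‖ ^ 2 := by
        gcongr; exact sq_norm_le_sum_sq_norm (x - xs)
    _ = ∑ i, (|Real.cos (xs i)| / 2 * |x i - xs i|) ^ 2 := by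
        simp only [mul_sum, mul_pow, Real.norm_eq_abs,
          (sin_eq_and_abs_cos_eq_of_eq_or_eq_pi_sub (hxs _)).2]
    _ ≤ ∑ i, (Real.sin (x i) - Real.sin δ) ^ 2 := by
        refine sum_le_sum fun i _ => ?_
        obtain ⟨hsin, hcos⟩ := sin_eq_and_abs_cos_eq_of_eq_or_eq_pi_sub (hxs i)
        rw [← hsin, ← sq_abs (Real.sin _ - _)]
        gcongr
        refine abs_cos_div_two_mul_le_abs_sin_sub_sin ?_
        rw [hcos, ← Real.norm_eq_abs]
        exact (norm_le_pi_norm (x - xs) i).trans hx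

section TridiagonalSystem

variable {N : ℕ} {k σ : ℝ} {C : Matrix (Fin N) (Fin N) ℝ}

lemma sum_sub_mul_add_mulVec_eq (hC : ∀ i j : Fin N, C i j = tridiagCoeff k i j)
    {Ω : Fin N → ℝ}
    (hΩ : ∀ i : Fin N,
      Ω i = (if (i : ℕ) = 0 then k * σ else 0) + (if (i : ℕ) = N - 1 then σ else 0))
    (s : Fin N → ℝ) :
    ∑ i, (s i - σ) * (Ω i + (C *ᵥ s) i) = ∑ i, ∑ j, (s i - σ) * C i j * (s j - σ) := by
  have hΩ_cancel : ∀ i : Fin N, Ω i + σ * ∑ j, C i j = 0 := by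
    intro i
    simp only [hC, hΩ]
    rw [Fin.sum_univ_eq_sum_range (tridiagCoeff k i) N, sum_tridiagCoeff k i.isLt]
    split_ifs <;> ring
  refine sum_congr rfl fun i _ => ?_
  have hmulVec : (C *ᵥ s) i = ∑ j, C i j * (s j - σ) + σ * ∑ j, C i j := by
    simp only [mulVec, dotProduct, mul_sum, ← sum_add_distrib]
    exact sum_congr rfl fun j _ => by ring
  rw [hmulVec, ← add_assoc, add_comm (Ω i), add_assoc, hΩ_cancel, add_zero, mul_sum]
  exact sum_congr rfl fun j _ => by ring

lemma sum_mul_mul_le_neg_mul_sum_sq (hk : -1 < k)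
    (hC : ∀ i j : Fin N, C i j = tridiagCoeff k i j) (v : Fin N → ℝ) :
    ∑ i, ∑ j, v i * C i j * v j ≤ -((1 + k) / (2 * N ^ 2)) * ∑ i, v i ^ 2 := by
  obtain ⟨w, hwN, hv⟩ : ∃ w : ℕ → ℝ, w N = 0 ∧ ∀ i : Fin N, v i = w i :=
    ⟨fun n => if h : n < N then v ⟨n, h⟩ else 0, by simp, fun i => by simp⟩
  have hsq : ∑ i, v i ^ 2 = ∑ n ∈ range N, w n ^ 2 := by
    simp only [hv]; exact Fin.sum_univ_eq_sum_range (fun n => w n ^ 2) N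
  have hform : ∑ i, ∑ j, v i * C i j * v j =
      ∑ n ∈ range N, ∑ m ∈ range N, w n * tridiagCoeff k n m * w m := by
    simp only [hv, hC]
    rw [← Fin.sum_univ_eq_sum_range]
    exact sum_congr rfl fun i _ =>
      Fin.sum_univ_eq_sum_range (fun m => w i * tridiagCoeff k i m * w m) N
  rw [hform, hsq, sum_mul_tridiagCoeff_mul hwN]
  rcases N.eq_zero_or_pos with rfl | hN
  · simp
  have hQ := sum_sq_le_two_mul_sq_mul_sum_sq_sub_sum_mul_succ hwN
  have hk' : 0 ≤ 1 + k := by linarith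
  rw [neg_mul, neg_mul, neg_le_neg_iff, div_mul_eq_mul_div, div_le_iff₀ (by positivity)]
  linarith [mul_le_mul_of_nonneg_left hQ hk']

end TridiagonalSystem

/-- For `k > −1`, `δ ∈ (0, π/2)` and `Γ = sin`, at every
equilibrium `x*` (each component equal to `δ` or `π−δ`) there are `c₀ > 0`
and a neighborhood `U` of `x*` on which the derivative of the Lyapunov
functional along the flow satisfies
`Σᵢ (sin xᵢ − sin δ)(Ω^δ + C sin(x))ᵢ ≤ −c₀‖x − x*‖²`. -/
theorem local_energy_decay_bound (N : ℕ) (hN : 1 ≤ N) (k δ : ℝ) (hk : -1 < k)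
    (hδ : δ ∈ Set.Ioo 0 (Real.pi / 2))
    (C : Matrix (Fin N) (Fin N) ℝ)
    (hC : ∀ i j : Fin N, C i j =
      if (i : ℕ) = (j : ℕ) then -(1 + k)
      else if (j : ℕ) = (i : ℕ) + 1 then 1
      else if (i : ℕ) = (j : ℕ) + 1 then k else 0)
    (Ω : Fin N → ℝ)
    (hΩ : ∀ i : Fin N, Ω i =
      (if (i : ℕ) = 0 then k * Real.sin δ else 0) +
        (if (i : ℕ) = N - 1 then Real.sin δ else 0))
    (xs : Fin N → ℝ) (hxs : ∀ i, xs i = δ ∨ xs i = Real.pi - δ) :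
    ∃ c₀ > (0 : ℝ), ∃ U ∈ nhds xs, ∀ x ∈ U,
      ∑ i : Fin N, (Real.sin (x i) - Real.sin δ) *
          (Ω i + (C *ᵥ fun j => Real.sin (x j)) i) ≤ -c₀ * ‖x - xs‖ ^ 2 := by
  have hcos : 0 < |Real.cos δ| :=
    abs_pos.mpr (Real.cos_pos_of_mem_Ioo ⟨by linarith [hδ.1, Real.pi_pos], hδ.2⟩).ne'
  have hk' : 0 < 1 + k := by linarith
  have hN' : (0 : ℝ) < N := by exact_mod_cast hN
  set c := (1 + k) / (2 * N ^ 2)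
  set r := |Real.cos δ| / 2
  refine ⟨c * r ^ 2, by positivity, Metric.closedBall xs r,
    Metric.closedBall_mem_nhds xs (by positivity), fun x hx => ?_⟩
  have hnear := sq_mul_sq_norm_sub_le_sum_sq_sin_sub_sin hxs (mem_closedBall_iff_norm.mp hx)
  calc _ = ∑ i, ∑ j, (Real.sin (x i) - Real.sin δ) * C i j * (Real.sin (x j) - Real.sin δ) :=
        sum_sub_mul_add_mulVec_eq hC hΩ fun j => Real.sin (x j)
    _ ≤ -c * ∑ i, (Real.sin (x i) - Real.sin δ) ^ 2 := sum_mul_mul_le_neg_mul_sum_sq hk hC _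
    _ ≤ -(c * r ^ 2) * ‖x - xs‖ ^ 2 := by
        rw [neg_mul, neg_mul, neg_le_neg_iff, mul_assoc]
        gcongr
end

section
/- Let N ≥ 1, let k ≠ 0 be real, let Ω ∈ ℝ^N, and let Γ: ℝ → ℝ. Let C(k) denote the N×N real tridiagonal matrix with all diagonal entries −(1+k), all superdiagonal entries 1, and all subdiagonal entries k. If x: ℝ → ℝ^N is a differentiable solution of ẋ = Ω + C(k)Γ(x), then y: ℝ → ℝ^N defined by yᵢ(t) = x_{N+1−i}(t/k) is a differentiable solution of ẏ = Ω′ + C(1/k)Γ(y), where Ω′ᵢ = Ω_{N+1−i}/k for i = 1,…,N. -/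
open Matrix

/-!
Reversing the order of the oscillators swaps the roles of the super- and subdiagonal, so
`C(1/k)` is `C(k)` read backwards and divided by `k`. Rescaling time by `1/k` multiplies the
velocity field by the same factor `1/k`, so the reversed, rescaled trajectory solves the system
with parameter `1/k`.
-/

def chainCoupling (N : ℕ) (c : ℝ) : Matrix (Fin N) (Fin N) ℝ :=
  Matrix.of fun i j =>
    if (i : ℕ) = (j : ℕ) then -(1 + c)
    else if (j : ℕ) = (i : ℕ) + 1 then 1
    else if (i : ℕ) = (j : ℕ) + 1 then c else 0

theorem chainCoupling_inv {N : ℕ} {k : ℝ} (hk : k ≠ 0) :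
    chainCoupling N k⁻¹ = k⁻¹ • (chainCoupling N k).submatrix Fin.revPerm Fin.revPerm := by
  ext i j
  have := i.isLt
  have := j.isLt
  simp only [chainCoupling, of_apply, Matrix.smul_apply, submatrix_apply, Fin.revPerm_apply,
    Fin.val_rev, smul_eq_mul]
  split_ifs <;> (try field_simp) <;> first | omega | ring

theorem chainCoupling_inv_mulVec {N : ℕ} {k : ℝ} (hk : k ≠ 0) (v : Fin N → ℝ) (i : Fin N) :
    (chainCoupling N k⁻¹ *ᵥ v) i = k⁻¹ * (chainCoupling N k *ᵥ fun j => v j.rev) i.rev := by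
  rw [chainCoupling_inv hk, smul_mulVec, submatrix_mulVec_equiv]
  rfl

theorem reversal_symmetry_general (N : ℕ) (k : ℝ) (hk : k ≠ 0)
    (Ω : Fin N → ℝ) (Γ : ℝ → ℝ)
    (Cm : ℝ → Matrix (Fin N) (Fin N) ℝ)
    (hCm : ∀ (c : ℝ) (i j : Fin N), Cm c i j =
      if (i : ℕ) = (j : ℕ) then -(1 + c)
      else if (j : ℕ) = (i : ℕ) + 1 then 1
      else if (i : ℕ) = (j : ℕ) + 1 then c else 0)
    (x : ℝ → Fin N → ℝ)
    (hx : ∀ (t : ℝ) (i : Fin N),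
      HasDerivAt (fun s => x s i) (Ω i + (Cm k *ᵥ fun j => Γ (x t j)) i) t)
    (y : ℝ → Fin N → ℝ) (hy : ∀ (t : ℝ) (i : Fin N), y t i = x (t / k) i.rev)
    (Ω' : Fin N → ℝ) (hΩ' : ∀ i : Fin N, Ω' i = Ω i.rev / k) :
    ∀ (t : ℝ) (i : Fin N),
      HasDerivAt (fun s => y s i) (Ω' i + (Cm (1 / k) *ᵥ fun j => Γ (y t j)) i) t := by
  obtain rfl : Cm = chainCoupling N := funext fun c => Matrix.ext (hCm c)
  intro t i
  have hdiv : HasDerivAt (fun s => s / k) (1 / k) t := (hasDerivAt_id' t).div_const k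
  have hxk : HasDerivAt (fun s => x (s / k) i.rev)
      ((Ω i.rev + (chainCoupling N k *ᵥ fun j => Γ (x (t / k) j)) i.rev) * (1 / k)) t := by
    exact (hx (t / k) i.rev).comp t hdiv
  simp only [hy, Fin.rev_rev, hΩ', one_div, chainCoupling_inv_mulVec hk] at hxk ⊢
  convert hxk using 1
  ring

/-- Reversal symmetry of the phase-difference system: if `x`
solves `ẋ = Ω + C(k)Γ(x)` with `k ≠ 0`, then `yᵢ(t) = x_{N+1−i}(t/k)` solves
`ẏ = Ω′ + C(1/k)Γ(y)` with `Ω′ᵢ = Ω_{N+1−i}/k`. -/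
theorem reversal_symmetry (N : ℕ) (hN : 1 ≤ N) (k : ℝ) (hk : k ≠ 0)
    (Ω : Fin N → ℝ) (Γ : ℝ → ℝ)
    (Cm : ℝ → Matrix (Fin N) (Fin N) ℝ)
    (hCm : ∀ (c : ℝ) (i j : Fin N), Cm c i j =
      if (i : ℕ) = (j : ℕ) then -(1 + c)
      else if (j : ℕ) = (i : ℕ) + 1 then 1
      else if (i : ℕ) = (j : ℕ) + 1 then c else 0)
    (x : ℝ → Fin N → ℝ)
    (hx : ∀ (t : ℝ) (i : Fin N),
      HasDerivAt (fun s => x s i) (Ω i + (Cm k *ᵥ fun j => Γ (x t j)) i) t)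
    (y : ℝ → Fin N → ℝ) (hy : ∀ (t : ℝ) (i : Fin N), y t i = x (t / k) i.rev)
    (Ω' : Fin N → ℝ) (hΩ' : ∀ i : Fin N, Ω' i = Ω i.rev / k) :
    ∀ (t : ℝ) (i : Fin N),
      HasDerivAt (fun s => y s i) (Ω' i + (Cm (1 / k) *ᵥ fun j => Γ (y t j)) i) t :=
  reversal_symmetry_general N k hk Ω Γ Cm hCm x hx y hy Ω' hΩ'
end
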